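/- arXiv:2505.04271 — 8 statements merged into one kernel-verified Lean document; each statement's English description precedes it below -/
import Mathlib

section
/- Let p be a prime number, A a commutative ring, ψ a Frobenius lift on A at p, and I an ideal of A with ψ(I) ⊆ I^p and such that for every k and every f ∈ A, p·f ∈ I^k implies f ∈ I^k. Then for every n ≥ 0 and every a ∈ I^n there exists b ∈ I^{p·n} with ψ(a) = a^p + p·b. -/
/-- Let `p` be a prime, `A` a commutative ring, `ψ` a Frobenius lift on `A`
at `p` (a ring endomorphism with `ψ a = a ^ p + p * b` for some `b`, for every `a`), and `I`
an ideal with `ψ(I) ⊆ I ^ p` and such that `p * f ∈ I ^ k` implies `f ∈ I ^ k` for all `k`.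
Then for every `n` and every `a ∈ I ^ n` there is `b ∈ I ^ (p * n)` with `ψ a = a ^ p + p * b`. -/
theorem frobenius_lift_power_ideal
    {A : Type*} [CommRing A] (p : ℕ) (hp : p.Prime) (ψ : A →+* A)
    (hF : ∀ a : A, ∃ b : A, ψ a = a ^ p + p * b)
    (I : Ideal A) (hψI : ∀ a ∈ I, ψ a ∈ I ^ p)
    (hflat : ∀ (k : ℕ) (f : A), (p : A) * f ∈ I ^ k → f ∈ I ^ k)
    (n : ℕ) (a : A) (ha : a ∈ I ^ n) :
    ∃ b ∈ I ^ (p * n), ψ a = a ^ p + p * b := by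
  obtain ⟨b, hb⟩ := hF a
  refine ⟨b, ?_, hb⟩
  have hmap : Ideal.map ψ I ≤ I ^ p := Ideal.map_le_iff_le_comap.2 hψI
  have hψa : ψ a ∈ I ^ (p * n) := by
    have h1 : ψ a ∈ Ideal.map ψ (I ^ n) := Ideal.mem_map_of_mem ψ ha
    rw [Ideal.map_pow] at h1
    have h2 : (Ideal.map ψ I) ^ n ≤ (I ^ p) ^ n := Ideal.pow_right_mono hmap n
    rw [← pow_mul] at h2
    exact h2 h1
  have hap : a ^ p ∈ I ^ (p * n) := by
    rw [mul_comm, pow_mul]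
    exact Ideal.pow_mem_pow ha p
  apply hflat
  have : (p : A) * b = ψ a - a ^ p := by rw [hb]; ring
  rw [this]
  exact Ideal.sub_mem _ hψa hap
end

section
/- Let p be a prime number, A a commutative ring, ψ a Frobenius lift on A at p, and I an ideal of A with ψ(I) ⊆ I^p and such that for every k and every f ∈ A, p·f ∈ I^k implies f ∈ I^k. Let Φ : A[X] → A[X] be the ring homomorphism determined by Φ(X) = X^p and Φ(C a) = C(ψ a) for a ∈ A (so Φ(Σ a_i X^i) = Σ ψ(a_i) X^{p·i}, i.e. Φ is eval₂ along C ∘ ψ at X^p). Then Φ maps the Rees algebra A[It] = { f ∈ A[X] : coeff_i(f) ∈ I^i for all i } into itself, and for every f in the Rees algebra there exists t in the Rees algebra with Φ(f) = f^p + p·t; in particular the Rees algebra carries an induced Frobenius lift at p. -/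
open Polynomial

/-! The endomorphism `Φ` is `f ↦ expand p (map ψ f)`, which sends the coefficient of `X ^ c` to
`ψ (f.coeff c) ∈ I ^ (p * c)` in degree `p * c`, so it preserves the Rees algebra. The elements `x`
with `φ x ≡ x ^ p (mod p)` form a subsemiring (for sums by the binomial congruence), which contains
all constants and `X`, hence is all of `A[X]`. Finally, the witness `t` with `p * t = Φ f - f ^ p`
lies in the Rees algebra because `p` is a nonzerodivisor modulo every power of `I`. -/

def frobeniusLiftLocus {R : Type*} [CommRing R] {p : ℕ} (hp : p.Prime) (φ : R →+* R) :
    Subsemiring R where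
  carrier := {x | ∃ y, φ x = x ^ p + p * y}
  zero_mem' := ⟨0, by simp [hp.ne_zero]⟩
  one_mem' := ⟨0, by simp⟩
  add_mem' := by
    rintro x y ⟨s, hs⟩ ⟨t, ht⟩
    obtain ⟨r, hr⟩ := exists_add_pow_prime_eq hp x y
    exact ⟨s + t - x * y * r, by rw [map_add, hs, ht, hr]; ring⟩
  mul_mem' := by
    rintro x y ⟨s, hs⟩ ⟨t, ht⟩
    exact ⟨s * y ^ p + x ^ p * t + p * s * t, by rw [map_mul, hs, ht]; ring⟩

namespace Polynomial

variable {A : Type*} [CommRing A] {p : ℕ}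

theorem eval₂RingHom_C_comp_X_pow {B : Type*} [CommSemiring B] (ψ : A →+* B) (f : A[X]) :
    eval₂RingHom (C.comp ψ) (X ^ p) f = expand B p (f.map ψ) := by
  rw [coe_eval₂RingHom, coe_expand, eval₂_map]

theorem expand_map_mem_reesAlgebra {B : Type*} [CommRing B] (hp : 0 < p) {ψ : A →+* B}
    {I : Ideal A} {J : Ideal B} (hIJ : I.map ψ ≤ J ^ p) {f : A[X]} (hf : f ∈ reesAlgebra I) :
    expand B p (f.map ψ) ∈ reesAlgebra J := by
  rw [mem_reesAlgebra_iff]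
  intro i
  rw [coeff_expand hp, coeff_map]
  split_ifs with hpi
  · obtain ⟨c, rfl⟩ := hpi
    rw [Nat.mul_div_cancel_left c hp, pow_mul]
    have hle : (I ^ c).map ψ ≤ (J ^ p) ^ c := by
      rw [Ideal.map_pow]
      exact Ideal.pow_right_mono hIJ c
    exact hle (Ideal.mem_map_of_mem ψ (hf c))
  · exact Ideal.zero_mem _

theorem frobeniusLiftLocus_eval₂RingHom_C_comp_X_pow_eq_top (hp : p.Prime) {ψ : A →+* A}
    (hψ : ∀ a, ∃ b, ψ a = a ^ p + p * b) :
    frobeniusLiftLocus hp (eval₂RingHom (C.comp ψ) (X ^ p)) = ⊤ := by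
  refine eq_top_iff.mpr ?_
  rintro f -
  induction f using Polynomial.induction_on with
  | C a =>
    obtain ⟨b, hb⟩ := hψ a
    exact ⟨C b, by simp [hb]⟩
  | add f g hf hg => exact add_mem hf hg
  | monomial n a ih =>
    rw [pow_succ, ← mul_assoc]
    exact mul_mem ih ⟨0, by simp⟩

theorem mem_reesAlgebra_of_natCast_mul_mem {I : Ideal A}
    (hI : ∀ (k : ℕ) (a : A), (p : A) * a ∈ I ^ k → a ∈ I ^ k) {g : A[X]}
    (hg : (p : A[X]) * g ∈ reesAlgebra I) : g ∈ reesAlgebra I := fun k =>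
  hI k _ (by simpa only [coeff_natCast_mul] using hg k)

end Polynomial

/-- With `ψ` a Frobenius lift at the prime `p` on `A`, `I` an ideal with
`ψ(I) ⊆ I ^ p` and `p * f ∈ I ^ k → f ∈ I ^ k`, the ring endomorphism `Φ` of `A[X]` given by
`X ↦ X ^ p` and `C a ↦ C (ψ a)` (i.e. `eval₂` along `C ∘ ψ` at `X ^ p`) maps the Rees algebra
`A[It]` into itself, and for every `f` in the Rees algebra there is `t` in the Rees algebra with
`Φ f = f ^ p + p * t`; in particular the Rees algebra carries an induced Frobenius lift at `p`. -/
theorem rees_algebra_frobenius_lift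
    {A : Type*} [CommRing A] (p : ℕ) (hp : p.Prime) (ψ : A →+* A)
    (hF : ∀ a : A, ∃ b : A, ψ a = a ^ p + p * b)
    (I : Ideal A) (hψI : ∀ a ∈ I, ψ a ∈ I ^ p)
    (hflat : ∀ (k : ℕ) (f : A), (p : A) * f ∈ I ^ k → f ∈ I ^ k) :
    (∀ f ∈ reesAlgebra I,
        Polynomial.eval₂RingHom (Polynomial.C.comp ψ) (Polynomial.X ^ p) f ∈ reesAlgebra I) ∧
      (∀ f ∈ reesAlgebra I, ∃ t ∈ reesAlgebra I,
        Polynomial.eval₂RingHom (Polynomial.C.comp ψ) (Polynomial.X ^ p) f =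
          f ^ p + (p : A[X]) * t) := by
  have hmem : ∀ f ∈ reesAlgebra I, eval₂RingHom (C.comp ψ) (X ^ p) f ∈ reesAlgebra I :=
    fun f hf => by
      rw [eval₂RingHom_C_comp_X_pow]
      exact expand_map_mem_reesAlgebra hp.pos (Ideal.map_le_iff_le_comap.mpr hψI) hf
  refine ⟨hmem, fun f hf => ?_⟩
  have hlocus : f ∈ frobeniusLiftLocus hp (eval₂RingHom (C.comp ψ) (X ^ p)) := by
    rw [frobeniusLiftLocus_eval₂RingHom_C_comp_X_pow_eq_top hp hF]
    trivial
  obtain ⟨t, ht⟩ := hlocus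
  refine ⟨t, mem_reesAlgebra_of_natCast_mul_mem hflat ?_, ht⟩
  rw [eq_sub_of_add_eq' ht.symm]
  exact sub_mem (hmem f hf) (pow_mem hf p)
end

section
/- Let A be a commutative ring with an ℕ-grading 𝒜 : ℕ → Submodule ℤ A making A a graded algebra. Let p be a prime number and ψ a Frobenius lift on A at p such that ψ(𝒜 m) ⊆ 𝒜(p·m) for every m, and assume that for every m and every f ∈ A, p·f ∈ 𝒜 m implies f ∈ 𝒜 m. Let a ∈ 𝒜 1 be a homogeneous element of degree 1 with ψ(a) = a^p. Then there exists a ring homomorphism Φ from the degree-zero part of the localization of A at the powers of a (HomogeneousLocalization.Away 𝒜 a) to itself such that Φ sends the class of x/a^n to the class of ψ(x)/a^{p·n} for every n and every homogeneous x ∈ 𝒜 n, and Φ is a Frobenius lift at p: for every y there exists h with Φ(y) = y^p + p·h. -/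
/-- Let `A` be a commutative ring with an `ℕ`-grading `𝒜` making it a graded
`ℤ`-algebra, `p` a prime, `ψ` a Frobenius lift at `p` with `ψ (𝒜 m) ⊆ 𝒜 (p * m)` and with
`p * f ∈ 𝒜 m → f ∈ 𝒜 m`, and `a ∈ 𝒜 1` with `ψ a = a ^ p`. Then the degree-zero part of the
localization away from `a` (`HomogeneousLocalization.Away 𝒜 a`) admits a ring endomorphism `Φ`
sending the class of `x / a ^ n` (for `x ∈ 𝒜 n`) to the class of `ψ x / a ^ (p * n)`, and `Φ`
is a Frobenius lift at `p`. -/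
theorem homogeneous_localization_away_frobenius_lift
    {A : Type*} [CommRing A] (𝒜 : ℕ → Submodule ℤ A) [GradedAlgebra 𝒜]
    (p : ℕ) (hp : p.Prime) (ψ : A →+* A)
    (hF : ∀ a : A, ∃ b : A, ψ a = a ^ p + p * b)
    (hψ𝒜 : ∀ (m : ℕ), ∀ x ∈ 𝒜 m, ψ x ∈ 𝒜 (p * m))
    (hflat : ∀ (m : ℕ) (f : A), (p : A) * f ∈ 𝒜 m → f ∈ 𝒜 m)
    (a : A) (ha : a ∈ 𝒜 1) (hfa : ψ a = a ^ p) :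
    ∃ Φ : HomogeneousLocalization.Away 𝒜 a →+* HomogeneousLocalization.Away 𝒜 a,
      (∀ (n : ℕ) (x : A) (hx : x ∈ 𝒜 n) (han : a ^ n ∈ 𝒜 n)
          (hψx : ψ x ∈ 𝒜 (p * n)) (hapn : a ^ (p * n) ∈ 𝒜 (p * n)),
          Φ (HomogeneousLocalization.mk
              ⟨n, ⟨x, hx⟩, ⟨a ^ n, han⟩, pow_mem (Submonoid.mem_powers a) n⟩) =
            HomogeneousLocalization.mk
              ⟨p * n, ⟨ψ x, hψx⟩, ⟨a ^ (p * n), hapn⟩, pow_mem (Submonoid.mem_powers a) (p * n)⟩) ∧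
      (∀ y : HomogeneousLocalization.Away 𝒜 a,
          ∃ h : HomogeneousLocalization.Away 𝒜 a, Φ y = y ^ p + p * h) := by
  classical
  classical
  set L := Localization (Submonoid.powers a) with hL
  have han : ∀ n : ℕ, a ^ n ∈ 𝒜 n := fun n => by
    simpa using SetLike.pow_mem_graded n ha
  -- representation lemma
  have hrep : ∀ y : HomogeneousLocalization.Away 𝒜 a, ∃ (n : ℕ) (x : A) (hx : x ∈ 𝒜 n),
      y = HomogeneousLocalization.mk
        (⟨n, ⟨x, hx⟩, ⟨a ^ n, han n⟩, ⟨n, rfl⟩⟩ :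
          HomogeneousLocalization.NumDenSameDeg 𝒜 (Submonoid.powers a)) := by
    intro y
    obtain ⟨c, rfl⟩ := HomogeneousLocalization.mk_surjective y
    obtain ⟨k, hk⟩ := c.den_mem
    by_cases h0 : a ^ k = 0
    · have : Subsingleton (HomogeneousLocalization.Away 𝒜 a) :=
        HomogeneousLocalization.subsingleton 𝒜 ⟨k, h0⟩
      exact ⟨0, 0, zero_mem _, Subsingleton.elim _ _⟩
    · have hdeg : k = c.deg :=
        DirectSum.degree_eq_of_mem_mem 𝒜 (han k) (by simp only [] at hk; rw [hk]; exact c.den.2) h0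
      refine ⟨k, c.num, hdeg ▸ c.num.2, ?_⟩
      apply HomogeneousLocalization.val_injective
      rw [HomogeneousLocalization.val_mk, HomogeneousLocalization.val_mk]
      congr 1
      exact Subtype.ext hk.symm
  -- the lift on full localizations
  have hv : ((algebraMap A L).comp ψ) a * (Localization.mk 1 ⟨a ^ p, ⟨p, rfl⟩⟩ : L) = 1 := by
    rw [RingHom.comp_apply, hfa, ← Localization.mk_one_eq_algebraMap, Localization.mk_mul,
      mul_one, one_mul]
    exact Localization.mk_self ⟨a ^ p, _⟩
  set Ψ : L →+* L := Localization.awayLift ((algebraMap A L).comp ψ) a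
    (isUnit_iff_exists_inv.mpr ⟨_, hv⟩) with hΨ
  have hΨmk : ∀ (n : ℕ) (x : A), Ψ (Localization.mk x ⟨a ^ n, ⟨n, rfl⟩⟩) =
      (Localization.mk (ψ x) ⟨a ^ (p * n), ⟨p * n, rfl⟩⟩ : L) := by
    intro n x
    rw [hΨ, Localization.awayLift_mk (hv := hv), RingHom.comp_apply,
      ← Localization.mk_one_eq_algebraMap, Localization.mk_pow, Localization.mk_mul]
    rw [one_pow, mul_one, one_mul]
    congr 1
    exact Subtype.ext (by simp [pow_mul])
  -- Ψ maps degree-zero classes to degree-zero classes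
  have hΨval : ∀ y : HomogeneousLocalization.Away 𝒜 a, ∃ z : HomogeneousLocalization.Away 𝒜 a,
      z.val = Ψ y.val := by
    intro y
    obtain ⟨n, x, hx, rfl⟩ := hrep y
    refine ⟨HomogeneousLocalization.mk
      (⟨p * n, ⟨ψ x, hψ𝒜 n x hx⟩, ⟨a ^ (p * n), han _⟩, ⟨p * n, rfl⟩⟩ :
        HomogeneousLocalization.NumDenSameDeg 𝒜 (Submonoid.powers a)), ?_⟩
    rw [HomogeneousLocalization.val_mk, HomogeneousLocalization.val_mk]
    exact (hΨmk n x).symm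
  choose Φf hΦf using hΨval
  let Φ : HomogeneousLocalization.Away 𝒜 a →+* HomogeneousLocalization.Away 𝒜 a :=
  { toFun := Φf
    map_one' := by
      apply HomogeneousLocalization.val_injective
      rw [hΦf, HomogeneousLocalization.val_one, map_one]
    map_mul' := fun y z => by
      apply HomogeneousLocalization.val_injective
      rw [hΦf, HomogeneousLocalization.val_mul, HomogeneousLocalization.val_mul, map_mul,
        hΦf, hΦf]
    map_zero' := by
      apply HomogeneousLocalization.val_injective
      rw [hΦf, HomogeneousLocalization.val_zero, map_zero]
    map_add' := fun y z => by
      apply HomogeneousLocalization.val_injective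
      rw [hΦf, HomogeneousLocalization.val_add, HomogeneousLocalization.val_add, map_add,
        hΦf, hΦf] }
  have hΦval : ∀ y, (Φ y).val = Ψ y.val := hΦf
  refine ⟨Φ, ?_, ?_⟩
  · intro n x hx han' hψx hapn
    apply HomogeneousLocalization.val_injective
    rw [hΦval, HomogeneousLocalization.val_mk, HomogeneousLocalization.val_mk]
    exact hΨmk n x
  · intro y
    obtain ⟨n, x, hx, rfl⟩ := hrep y
    obtain ⟨b, hb⟩ := hF x
    have hxp : x ^ p ∈ 𝒜 (p * n) := by
      simpa [smul_eq_mul] using SetLike.pow_mem_graded p hx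
    have hbmem : b ∈ 𝒜 (p * n) := by
      refine hflat _ _ ?_
      have hpb : (p : A) * b = ψ x - x ^ p := by rw [hb]; ring
      rw [hpb]
      exact sub_mem (hψ𝒜 n x hx) hxp
    refine ⟨HomogeneousLocalization.mk
      (⟨p * n, ⟨b, hbmem⟩, ⟨a ^ (p * n), han _⟩, ⟨p * n, rfl⟩⟩ :
        HomogeneousLocalization.NumDenSameDeg 𝒜 (Submonoid.powers a)), ?_⟩
    apply HomogeneousLocalization.val_injective
    rw [hΦval, HomogeneousLocalization.val_mk, hΨmk, HomogeneousLocalization.val_add,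
      HomogeneousLocalization.val_pow, HomogeneousLocalization.val_mul,
      HomogeneousLocalization.val_natCast, HomogeneousLocalization.val_mk,
      HomogeneousLocalization.val_mk, Localization.mk_pow]
    have hcast : ((p : ℕ) : L) = Localization.mk (p : A) 1 := by
      rw [Localization.mk_one_eq_algebraMap, map_natCast]
    have hsub : ((⟨a ^ n, ⟨n, rfl⟩⟩ : Submonoid.powers a) ^ p :
        Submonoid.powers a) = ⟨a ^ (p * n), ⟨p * n, rfl⟩⟩ :=
      Subtype.ext (by simp [← pow_mul, mul_comm])
    rw [hcast, Localization.mk_mul, one_mul, hsub, Localization.add_mk_self, hb]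
end

section
/- Let R be a commutative Noetherian ring and x_1, …, x_n a permutable regular sequence in R. Let I = (x_1, …, x_r) with r ≤ n, let f ∈ R, let 1 ≤ i ≤ n and k ≥ 1, and assume x_i·f ∈ I^k. Then: if x_i ∈ I then f ∈ I^{k-1}, and if x_i ∉ I then f ∈ I^k. -/
/-!
Write `I = (z) + J` with `z` a generator and `J` generated by the others, and work modulo an
auxiliary ideal `N` generated by further elements of the sequence; permutability makes every
element regular modulo the ideal of any others together with `N`. Induction on the number of
generators gives:
* a generator `z` with `z f ∈ I^(k+1) + N` has `f ∈ Iᵏ + N`: since `I^(k+1) ⊆ z Iᵏ + J^(k+1)`,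
  `z (f - u) ∈ J^(k+1) + N` for some `u ∈ Iᵏ`, and `z` is regular modulo `J^(k+1) + N` by the
  next point for `J`;
* an element `y` regular modulo `I + N` is regular modulo `Iᵏ + N`: by induction on `k`,
  regularity modulo `J^(k+1) + (z) + N ⊇ I^(k+1) + N` turns `y f ∈ I^(k+1) + N` into
  `f ≡ z c` modulo `J^(k+1) + N`; then `z (y c) ∈ I^(k+1) + N`, so `y c ∈ Iᵏ + N` by the
  first point and `c ∈ Iᵏ + N`, whence `f ∈ I^(k+1) + N`.

For the theorem, `xᵢ` is a generator of `I` when `i ≤ r`; otherwise it is regular modulo `I`,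
hence modulo `Iᵏ`, and `f ∈ Iᵏ`.
-/

/-- A list `xs = [x₁, …, xₙ]` of elements of a commutative ring `R` is a regular sequence if
each `xᵢ` is a nonzerodivisor modulo the ideal generated by its predecessors, and the ideal
`(x₁, …, xₙ)` is proper. -/
def IsRegularSeq {R : Type*} [CommRing R] (xs : List R) : Prop :=
  (∀ (i : Fin xs.length) (f : R),
      xs.get i * f ∈ Ideal.span {a | a ∈ xs.take (i : ℕ)} →
        f ∈ Ideal.span {a | a ∈ xs.take (i : ℕ)}) ∧
    Ideal.span {a | a ∈ xs} ≠ ⊤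

/-- A list of elements of a commutative ring is a permutable regular sequence if every
permutation of it is a regular sequence. -/
def IsPermutableRegularSeq {R : Type*} [CommRing R] (xs : List R) : Prop :=
  ∀ ys : List R, ys.Perm xs → IsRegularSeq ys

section

open Ideal

variable {R : Type*} [CommRing R]

def IsRegularModulo (J : Ideal R) (y : R) : Prop :=
  ∀ ⦃f : R⦄, y * f ∈ J → f ∈ J

/-- Every permutation of `xs` is a regular sequence on `R ⧸ N`, properness aside; phrased through
the splittings `l₁ ++ a :: l₂` of the permutations so that no indices appear. -/
def IsPermRegularModulo (N : Ideal R) (xs : List R) : Prop :=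
  ∀ l₁ a l₂, (l₁ ++ a :: l₂).Perm xs → IsRegularModulo (ofList l₁ ⊔ N) a

lemma Ideal.ofList_eq_of_perm {l l' : List R} (h : l.Perm l') : ofList l = ofList l' :=
  congrArg span (Set.ext fun _ => h.mem_iff)

lemma Ideal.sup_pow_succ_le (A B : Ideal R) (k : ℕ) :
    (A ⊔ B) ^ (k + 1) ≤ A * (A ⊔ B) ^ k ⊔ B ^ (k + 1) := by
  induction k with
  | zero => simp
  | succ k ih =>
    calc (A ⊔ B) ^ (k + 2) = A * (A ⊔ B) ^ (k + 1) ⊔ B * (A ⊔ B) ^ (k + 1) := by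
          rw [pow_succ' _ (k + 1), Ideal.sup_mul]
      _ ≤ A * (A ⊔ B) ^ (k + 1) ⊔ B * (A * (A ⊔ B) ^ k ⊔ B ^ (k + 1)) :=
          sup_le_sup_left (mul_mono_right ih) _
      _ ≤ A * (A ⊔ B) ^ (k + 1) ⊔ B ^ (k + 2) := by
          rw [Ideal.mul_sup, ← sup_assoc, mul_left_comm, ← pow_succ' B]
          refine sup_le_sup_right (sup_le le_rfl (mul_mono_right ?_)) _
          exact (mul_mono_left le_sup_right).trans (pow_succ' (A ⊔ B) k).ge

namespace IsRegularModulo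

variable {J N : Ideal R} {y z f : R} {k : ℕ}

lemma mem_pow_of_mul_mem_pow_succ (hz : IsRegularModulo (J ^ (k + 1) ⊔ N) z)
    (hf : z * f ∈ (span {z} ⊔ J) ^ (k + 1) ⊔ N) : f ∈ (span {z} ⊔ J) ^ k ⊔ N := by
  have hle : (span {z} ⊔ J) ^ (k + 1) ⊔ N ≤
      span {z} * (span {z} ⊔ J) ^ k ⊔ (J ^ (k + 1) ⊔ N) := by
    rw [← sup_assoc]
    exact sup_le_sup_right (sup_pow_succ_le _ _ k) N
  obtain ⟨w, hw, v, hv, hwv⟩ := Submodule.mem_sup.mp (hle hf)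
  obtain ⟨u, hu, rfl⟩ := mem_span_singleton_mul.mp hw
  have hfu : f - u ∈ J ^ (k + 1) ⊔ N := hz <| by
    rwa [mul_sub, ← hwv, add_sub_cancel_left]
  have hJ : J ^ (k + 1) ⊔ N ≤ (span {z} ⊔ J) ^ k ⊔ N :=
    sup_le_sup_right ((pow_right_mono le_sup_right _).trans (pow_le_pow_right k.le_succ)) N
  simpa using add_mem (hJ hfu) (Submodule.mem_sup_left hu)

lemma span_sup_pow_succ (hyJ : IsRegularModulo (J ^ (k + 1) ⊔ (span {z} ⊔ N)) y)
    (hzJ : IsRegularModulo (J ^ (k + 1) ⊔ N) z)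
    (hyI : IsRegularModulo ((span {z} ⊔ J) ^ k ⊔ N) y) :
    IsRegularModulo ((span {z} ⊔ J) ^ (k + 1) ⊔ N) y := by
  set I := span {z} ⊔ J
  intro f hf
  have hle : I ^ (k + 1) ⊔ N ≤ J ^ (k + 1) ⊔ N ⊔ span {z} := by
    refine sup_le ((sup_pow_succ_le (span {z}) J k).trans ?_)
      (le_sup_right.trans le_sup_left)
    exact sup_le (Ideal.mul_le_left.trans le_sup_right) (le_sup_left.trans le_sup_left)
  have hf' : f ∈ J ^ (k + 1) ⊔ N ⊔ span {z} := by
    rw [sup_right_comm, sup_assoc]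
    exact hyJ (by rw [← sup_assoc, sup_right_comm]; exact hle hf)
  obtain ⟨g, hg, w, hw, rfl⟩ := Submodule.mem_sup.mp hf'
  obtain ⟨c, rfl⟩ := mem_span_singleton'.mp hw
  have hgI : g ∈ I ^ (k + 1) ⊔ N := sup_le_sup_right (pow_right_mono le_sup_right _) N hg
  have hzyc : z * (y * c) ∈ I ^ (k + 1) ⊔ N := by
    convert sub_mem hf (mul_mem_left _ y hgI) using 1
    ring
  have hc : c ∈ I ^ k ⊔ N := hyI (hzJ.mem_pow_of_mul_mem_pow_succ hzyc)
  have hzc : c * z ∈ I ^ (k + 1) ⊔ N := by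
    have hle : (I ^ k ⊔ N) * I ≤ I ^ (k + 1) ⊔ N := by
      rw [Ideal.sup_mul, ← pow_succ]
      exact sup_le_sup_left Ideal.mul_le_left _
    exact hle (mul_mem_mul hc (Submodule.mem_sup_left (mem_span_singleton_self z)))
  exact add_mem hgI hzc

end IsRegularModulo

namespace IsPermRegularModulo

variable {N : Ideal R} {xs : List R}

lemma perm {ys : List R} (h : IsPermRegularModulo N xs) (hp : xs.Perm ys) :
    IsPermRegularModulo N ys :=
  fun l₁ a l₂ hl => h l₁ a l₂ (hl.trans hp.symm)

lemma of_append {l : List R} (h : IsPermRegularModulo N (xs ++ l)) :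
    IsPermRegularModulo N xs :=
  fun l₁ a l₂ hl => h l₁ a (l₂ ++ l) (by simpa using hl.append_right l)

lemma isRegularModulo_of_mem_append {l : List R} {a : R} (h : IsPermRegularModulo N (xs ++ l))
    (ha : a ∈ l) : IsRegularModulo (ofList xs ⊔ N) a := by
  classical
  exact h xs a (l.erase a) ((List.perm_cons_erase ha).symm.append_left xs)

lemma isRegularModulo_cons {z : R} (h : IsPermRegularModulo N (z :: xs)) :
    IsRegularModulo (ofList xs ⊔ N) z :=
  h xs z [] (List.perm_append_singleton z xs)

lemma of_cons {z : R} (h : IsPermRegularModulo N (z :: xs)) : IsPermRegularModulo N xs :=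
  (h.perm (List.perm_append_singleton z xs).symm).of_append

lemma of_cons_sup {z : R} (h : IsPermRegularModulo N (z :: xs)) :
    IsPermRegularModulo (span {z} ⊔ N) xs := by
  intro l₁ a l₂ hl
  simpa only [ofList_cons, sup_left_comm, sup_assoc] using h (z :: l₁) a l₂ (hl.cons z)

theorem isRegularModulo_pow (h : IsPermRegularModulo N xs) {y : R}
    (hy : IsRegularModulo (ofList xs ⊔ N) y) (k : ℕ) :
    IsRegularModulo (ofList xs ^ k ⊔ N) y := by
  induction xs generalizing N y k with
  | nil =>
    cases k with
    | zero => simp [IsRegularModulo]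
    | succ k => simpa using hy
  | cons z xs ih =>
    induction k with
    | zero => simp [IsRegularModulo]
    | succ k ihk =>
      rw [ofList_cons] at hy ihk ⊢
      refine IsRegularModulo.span_sup_pow_succ ?_ ?_ ihk
      · exact ih h.of_cons_sup (by rwa [sup_left_comm, ← sup_assoc]) (k + 1)
      · exact ih h.of_cons h.isRegularModulo_cons (k + 1)

theorem mem_pow_of_mul_mem_pow_succ (h : IsPermRegularModulo N xs) {a f : R} (ha : a ∈ xs)
    {k : ℕ} (hf : a * f ∈ ofList xs ^ (k + 1) ⊔ N) : f ∈ ofList xs ^ k ⊔ N := by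
  classical
  have hp := List.perm_cons_erase ha
  have h' := h.perm hp
  rw [ofList_eq_of_perm hp, ofList_cons] at hf ⊢
  exact (h'.of_cons.isRegularModulo_pow h'.isRegularModulo_cons (k + 1)).mem_pow_of_mul_mem_pow_succ
    hf

end IsPermRegularModulo

lemma IsPermutableRegularSeq.isPermRegularModulo_bot {xs : List R}
    (h : IsPermutableRegularSeq xs) : IsPermRegularModulo ⊥ xs := by
  intro l₁ a l₂ hl f hf
  have hreg := (h _ hl).1 ⟨l₁.length, by simp⟩ f
  simp only [List.get_eq_getElem, List.getElem_append_right le_rfl, Nat.sub_self,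
    List.getElem_cons_zero, List.take_left' rfl] at hreg
  simpa using hreg (by simpa using hf)

end

theorem rees_mul_mem_pow_general
    {R : Type*} [CommRing R] (xs : List R)
    (hperm : IsPermutableRegularSeq xs)
    (r : ℕ)
    (I : Ideal R) (hI : I = Ideal.span {a | a ∈ xs.take r})
    (f : R) (i : Fin xs.length) (k : ℕ)
    (hxf : xs.get i * f ∈ I ^ k) :
    (xs.get i ∈ I → f ∈ I ^ (k - 1)) ∧ (xs.get i ∉ I → f ∈ I ^ k) := by
  have hreg : IsPermRegularModulo ⊥ (xs.take r ++ xs.drop r) := by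
    rw [List.take_append_drop]
    exact hperm.isPermRegularModulo_bot
  rw [← sup_bot_eq (I ^ k), hI] at hxf
  by_cases hir : (i : ℕ) < r
  · have hmem : xs.get i ∈ xs.take r := List.mem_take_iff_getElem.mpr ⟨i, by omega, rfl⟩
    refine ⟨fun _ => ?_, fun hnot => absurd (hI ▸ Ideal.subset_span hmem) hnot⟩
    cases k with
    | zero => simp
    | succ k => simpa [hI] using hreg.of_append.mem_pow_of_mul_mem_pow_succ hmem hxf
  · have hmem : xs.get i ∈ xs.drop r :=
      List.mem_drop_iff_getElem.mpr
        ⟨i - r, by omega, by simp only [List.get_eq_getElem]; congr; omega⟩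
    have hfk : f ∈ I ^ k := by
      have hy := hreg.isRegularModulo_of_mem_append hmem
      simpa [hI] using hreg.of_append.isRegularModulo_pow hy k hxf
    exact ⟨fun _ => Ideal.pow_le_pow_right (k.sub_le 1) hfk, fun _ => hfk⟩

/-- Let `R` be Noetherian, `x₁, …, xₙ` a permutable regular sequence,
`I = (x₁, …, x_r)` with `r ≤ n`, `f ∈ R`, `1 ≤ i ≤ n`, `k ≥ 1`, and `xᵢ * f ∈ I ^ k`.
Then `xᵢ ∈ I` implies `f ∈ I ^ (k - 1)`, and `xᵢ ∉ I` implies `f ∈ I ^ k`. -/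
theorem rees_mul_mem_pow
    {R : Type*} [CommRing R] [IsNoetherianRing R] (xs : List R)
    (hperm : IsPermutableRegularSeq xs)
    (r : ℕ) (hr : r ≤ xs.length)
    (I : Ideal R) (hI : I = Ideal.span {a | a ∈ xs.take r})
    (f : R) (i : Fin xs.length) (k : ℕ) (hk : 1 ≤ k)
    (hxf : xs.get i * f ∈ I ^ k) :
    (xs.get i ∈ I → f ∈ I ^ (k - 1)) ∧ (xs.get i ∉ I → f ∈ I ^ k) :=
  rees_mul_mem_pow_general xs hperm r I hI f i k hxf
end

section
/- Let R be a commutative Noetherian ring and x_1, …, x_t a regular sequence in R whose generated ideal P = (x_1, …, x_t) is prime. Let s ∈ R with s ∉ P, let g ∈ R and m ≥ 0, and assume s·g ∈ P^m. Then g ∈ P^m. -/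
/-!
Say that `x : σ → R` is quasi-regular on `s ⊆ σ` if every form `F` of degree `d` in the
variables `Xᵢ`, `i ∈ s`, with `F(x) ∈ J ^ (d + 1)`, `J = (xᵢ : i ∈ s)`, has all its coefficients
in `J`. Then any `a` that is a nonzerodivisor modulo `J` is one modulo every `J ^ k`: write
`u ∈ J ^ k` as `U(x)` with `U` a form of degree `k`; if `a u ∈ J ^ (k + 1)` then the coefficients
of `a U`, hence of `U`, lie in `J`, so `u ∈ J ^ (k + 1)`. Quasi-regularity survives adjoining an
index `i` with `xᵢ` regular modulo `J` (induction on `d`: split off the `Xᵢ`-divisible part of a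
form and cancel `xᵢ` by the previous fact), so a regular sequence is quasi-regular, and the
theorem is the case `J = P`, `a = s`.
-/

open MvPolynomial

section QuasiRegular

variable {R σ : Type*} [CommRing R] {x : σ → R} {s : Set σ}

theorem MvPolynomial.mem_supported_iff_support {F : MvPolynomial σ R} :
    F ∈ supported R s ↔ ∀ β ∈ F.support, ↑β.support ⊆ s := by
  simp only [mem_supported, Set.subset_def, Finset.mem_coe, mem_vars_iff_mem_support]
  grind

theorem MvPolynomial.isHomogeneous_iff_degree_eq {F : MvPolynomial σ R} {k : ℕ} :
    F.IsHomogeneous k ↔ ∀ β ∈ F.support, β.degree = k := by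
  simp [IsHomogeneous, IsWeightedHomogeneous, Finsupp.degree_eq_weight_one, Pi.one_def]

theorem MvPolynomial.IsHomogeneous.exists_eq_add_X_mul {F : MvPolynomial σ R} {i : σ} {d : ℕ}
    (hd : F.IsHomogeneous (d + 1)) (hF : F ∈ supported R (insert i s)) :
    ∃ F₀ G, F₀ ∈ supported R s ∧ F₀.IsHomogeneous (d + 1) ∧
      G ∈ supported R (insert i s) ∧ G.IsHomogeneous d ∧ F = F₀ + X i * G := by
  have hmod : ∀ β ∈ (F.modMonomial (Finsupp.single i 1)).support, β ∈ F.support ∧ β i = 0 := by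
    intro β hβ
    rw [mem_support_iff] at hβ ⊢
    by_cases hle : Finsupp.single i 1 ≤ β
    · exact absurd (coeff_modMonomial_of_le F hle) hβ
    · rw [coeff_modMonomial_of_not_le F hle] at hβ
      rw [Finsupp.single_le_iff] at hle
      exact ⟨hβ, by omega⟩
  have hdiv : ∀ β ∈ (F.divMonomial (Finsupp.single i 1)).support,
      Finsupp.single i 1 + β ∈ F.support := by
    intro β hβ
    rwa [mem_support_iff, coeff_divMonomial, ← mem_support_iff] at hβ
  rw [mem_supported_iff_support] at hF
  rw [isHomogeneous_iff_degree_eq] at hd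
  refine ⟨F.modMonomial (Finsupp.single i 1), F.divMonomial (Finsupp.single i 1), ?_, ?_, ?_, ?_,
    (modMonomial_add_divMonomial_single F i).symm⟩
  · refine mem_supported_iff_support.2 fun β hβ j hj => ?_
    have hβi := (hmod β hβ).2
    rcases hF β (hmod β hβ).1 hj with rfl | hjs
    · exact absurd hβi (Finsupp.mem_support_iff.1 hj)
    · exact hjs
  · exact isHomogeneous_iff_degree_eq.2 fun β hβ => hd β (hmod β hβ).1
  · refine mem_supported_iff_support.2 fun β hβ j hj => hF _ (hdiv β hβ) ?_
    simp only [Finset.mem_coe, Finsupp.mem_support_iff, Finsupp.add_apply] at hj ⊢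
    omega
  · refine isHomogeneous_iff_degree_eq.2 fun β hβ => ?_
    have := hd _ (hdiv β hβ)
    rw [map_add, Finsupp.degree_single] at this
    omega

theorem eval_mem_span_image_pow {F : MvPolynomial σ R} {k : ℕ} (hF : F ∈ supported R s)
    (hk : F.IsHomogeneous k) : eval x F ∈ Ideal.span (x '' s) ^ k := by
  rw [supported_eq_range_rename] at hF
  obtain ⟨p, rfl⟩ := (AlgHom.mem_range _).1 hF
  rw [IsHomogeneous.rename_isHomogeneous_iff Subtype.val_injective] at hk
  rw [eval_rename, Set.image_eq_range, Ideal.mem_span_pow_iff_exists_isHomogeneous]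
  exact ⟨p, hk, rfl⟩

theorem exists_isHomogeneous_of_mem_span_image_pow {g : R} {k : ℕ}
    (hg : g ∈ Ideal.span (x '' s) ^ k) :
    ∃ F ∈ supported R s, F.IsHomogeneous k ∧ eval x F = g := by
  rw [Set.image_eq_range, Ideal.mem_span_pow_iff_exists_isHomogeneous] at hg
  obtain ⟨p, hp, rfl⟩ := hg
  refine ⟨rename (↑) p, ?_, hp.rename_isHomogeneous, ?_⟩
  · rw [supported_eq_range_rename]
    exact ⟨p, rfl⟩
  · rw [eval_rename]
    rfl

theorem eval_mem_mul_span_image_pow {I : Ideal R} {F : MvPolynomial σ R} {k : ℕ}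
    (hF : F ∈ supported R s) (hk : F.IsHomogeneous k) (hI : F ∈ I.map C) :
    eval x F ∈ I * Ideal.span (x '' s) ^ k := by
  rw [F.as_sum, map_sum]
  refine Ideal.sum_mem _ fun β hβ => ?_
  rw [← mul_one (coeff β F), ← C_mul_monomial, map_mul, eval_C]
  refine Ideal.mul_mem_mul (mem_map_C_iff.1 hI β) (eval_mem_span_image_pow ?_ ?_)
  · refine mem_supported_iff_support.2 fun γ hγ => ?_
    rw [Finset.mem_singleton.1 (support_monomial_subset hγ)]
    exact mem_supported_iff_support.1 hF β hβ
  · exact isHomogeneous_monomial _ (isHomogeneous_iff_degree_eq.1 hk β hβ)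

def IsQuasiRegularOn (x : σ → R) (s : Set σ) : Prop :=
  ∀ (d : ℕ) (F : MvPolynomial σ R), F ∈ supported R s → F.IsHomogeneous d →
    eval x F ∈ Ideal.span (x '' s) ^ (d + 1) → F ∈ (Ideal.span (x '' s)).map C

theorem isQuasiRegularOn_empty (x : σ → R) : IsQuasiRegularOn x ∅ := by
  intro d F hF _ hFx
  rw [supported_empty] at hF
  obtain ⟨c, rfl⟩ := Algebra.mem_bot.1 hF
  simp_all

theorem IsQuasiRegularOn.mem_pow_of_mul_mem (hx : IsQuasiRegularOn x s) {a : R}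
    (ha : ∀ f, a * f ∈ Ideal.span (x '' s) → f ∈ Ideal.span (x '' s)) :
    ∀ {k : ℕ} {u : R}, a * u ∈ Ideal.span (x '' s) ^ k → u ∈ Ideal.span (x '' s) ^ k
  | 0, _, _ => by simp
  | k + 1, u, hu => by
    have hu' : u ∈ Ideal.span (x '' s) ^ k :=
      mem_pow_of_mul_mem hx ha (Ideal.pow_le_pow_right k.le_succ hu)
    obtain ⟨U, hU, hUk, rfl⟩ := exists_isHomogeneous_of_mem_span_image_pow hu'
    have haU : C a * U ∈ (Ideal.span (x '' s)).map C :=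
      hx k _ (Subalgebra.mul_mem _ (Subalgebra.algebraMap_mem _ a) hU) (hUk.C_mul a)
        (by rwa [map_mul, eval_C])
    have hUJ : U ∈ (Ideal.span (x '' s)).map C := mem_map_C_iff.2 fun β =>
      ha _ (by simpa only [coeff_C_mul] using mem_map_C_iff.1 haU β)
    rw [pow_succ']
    exact eval_mem_mul_span_image_pow hU hUk hUJ

theorem IsQuasiRegularOn.insert (hx : IsQuasiRegularOn x s) {i : σ}
    (hi : ∀ f, x i * f ∈ Ideal.span (x '' s) → f ∈ Ideal.span (x '' s)) :
    IsQuasiRegularOn x (insert i s) := by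
  have hJ : Ideal.span (x '' s) ≤ Ideal.span (x '' Insert.insert i s) :=
    Ideal.span_mono (Set.image_mono (Set.subset_insert i s))
  have hxi : (C (x i) : MvPolynomial σ R) ∈ (Ideal.span (x '' Insert.insert i s)).map C :=
    Ideal.mem_map_of_mem _ (Ideal.subset_span (Set.mem_image_of_mem x (Set.mem_insert i s)))
  intro d
  induction d with
  | zero =>
    intro F _ hF hFx
    rw [← totalDegree_zero_iff_isHomogeneous, totalDegree_eq_zero_iff_eq_C] at hF
    rw [hF, eval_C, zero_add, pow_one] at hFx
    rw [hF]
    exact Ideal.mem_map_of_mem _ hFx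
  | succ d ih =>
    intro F hF hFd hFx
    obtain ⟨F₀, G, hF₀, hF₀d, hG, hGd, rfl⟩ := hFd.exists_eq_add_X_mul hF
    obtain ⟨H, hH, hHd, hHx⟩ := exists_isHomogeneous_of_mem_span_image_pow hFx
    obtain ⟨H₀, H₁, hH₀, hH₀d, hH₁, hH₁d, rfl⟩ := hHd.exists_eq_add_X_mul hH
    simp only [map_add, map_mul, eval_X] at hHx
    have hH₀x : eval x H₀ ∈ Ideal.span (x '' s) ^ (d + 2) := eval_mem_span_image_pow hH₀ hH₀d
    have hdiff : x i * (eval x H₁ - eval x G) ∈ Ideal.span (x '' s) ^ (d + 1) := by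
      rw [show x i * (eval x H₁ - eval x G) = eval x F₀ - eval x H₀ by linear_combination hHx]
      exact sub_mem (eval_mem_span_image_pow hF₀ hF₀d)
        (Ideal.pow_le_pow_right (d + 1).le_succ hH₀x)
    obtain ⟨K, hK, hKd, hKx⟩ :=
      exists_isHomogeneous_of_mem_span_image_pow (hx.mem_pow_of_mul_mem hi hdiff)
    have hF₀K : F₀ - C (x i) * K ∈ (Ideal.span (x '' s)).map C := by
      refine hx (d + 1) _ (sub_mem hF₀ (Subalgebra.mul_mem _ (Subalgebra.algebraMap_mem _ _) hK))
        (hF₀d.sub (hKd.C_mul _)) ?_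
      rw [map_sub, map_mul, eval_C, hKx, show eval x F₀ - x i * (eval x H₁ - eval x G)
        = eval x H₀ by linear_combination -hHx]
      exact hH₀x
    have hGJ : G ∈ (Ideal.span (x '' Insert.insert i s)).map C := by
      refine ih G hG hGd ?_
      rw [show eval x G = eval x H₁ - eval x K by rw [hKx]; ring]
      exact sub_mem (eval_mem_span_image_pow hH₁ hH₁d)
        (Ideal.pow_right_mono hJ _ (eval_mem_span_image_pow hK hKd))
    rw [show F₀ + X i * G = (F₀ - C (x i) * K) + C (x i) * K + X i * G by ring]
    exact add_mem (add_mem (Ideal.map_mono hJ hF₀K) (Ideal.mul_mem_right _ _ hxi))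
      (Ideal.mul_mem_left _ _ hGJ)

theorem List.get_image_setOf_lt {α : Type*} (xs : List α) (n : ℕ) :
    xs.get '' {i | (i : ℕ) < n} = {a | a ∈ xs.take n} := by
  ext a
  simp only [Set.mem_image, Set.mem_ofPred_eq, List.mem_take_iff_getElem, List.get_eq_getElem,
    lt_min_iff]
  constructor
  · rintro ⟨i, hi, rfl⟩
    exact ⟨i, ⟨hi, i.isLt⟩, rfl⟩
  · rintro ⟨i, ⟨hin, hil⟩, rfl⟩
    exact ⟨⟨i, hil⟩, hin, rfl⟩

theorem isQuasiRegularOn_get_setOf_lt {xs : List R}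
    (hxs : ∀ (i : Fin xs.length) (f : R), xs.get i * f ∈ Ideal.span {a | a ∈ xs.take (i : ℕ)} →
      f ∈ Ideal.span {a | a ∈ xs.take (i : ℕ)}) :
    ∀ n, IsQuasiRegularOn xs.get {i | (i : ℕ) < n}
  | 0 => by simpa using isQuasiRegularOn_empty xs.get
  | n + 1 => by
    by_cases hn : n < xs.length
    · have hins : {i : Fin xs.length | (i : ℕ) < n + 1} =
          insert ⟨n, hn⟩ {i : Fin xs.length | (i : ℕ) < n} := by
        ext i
        simp only [Set.mem_ofPred_eq, Set.mem_insert_iff, Fin.ext_iff]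
        omega
      rw [hins]
      refine (isQuasiRegularOn_get_setOf_lt hxs n).insert fun f hf => ?_
      rw [List.get_image_setOf_lt] at hf ⊢
      exact hxs ⟨n, hn⟩ f hf
    · have hsame :
          {i : Fin xs.length | (i : ℕ) < n + 1} = {i : Fin xs.length | (i : ℕ) < n} := by
        ext i
        simp only [Set.mem_ofPred_eq]
        have := i.isLt
        omega
      rw [hsame]
      exact isQuasiRegularOn_get_setOf_lt hxs n

end QuasiRegular

theorem mem_prime_pow_of_mul_mem_general
    {R : Type*} [CommRing R] (xs : List R)
    (hreg : IsRegularSeq xs)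
    (P : Ideal R) (hP : P = Ideal.span {a | a ∈ xs}) (hprime : P.IsPrime)
    (s g : R) (hs : s ∉ P) (m : ℕ) (h : s * g ∈ P ^ m) :
    g ∈ P ^ m := by
  have hP' : P = Ideal.span (xs.get '' {i | (i : ℕ) < xs.length}) := by
    rw [hP, List.get_image_setOf_lt, List.take_length]
  subst hP'
  exact (isQuasiRegularOn_get_setOf_lt hreg.1 xs.length).mem_pow_of_mul_mem
    (fun f hf => (hprime.mem_or_mem hf).resolve_left hs) h

/-- Let `R` be Noetherian and `x₁, …, x_t` a regular sequence whose generated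
ideal `P` is prime. If `s ∉ P`, `g ∈ R`, `m ≥ 0` and `s * g ∈ P ^ m`, then `g ∈ P ^ m`. -/
theorem mem_prime_pow_of_mul_mem
    {R : Type*} [CommRing R] [IsNoetherianRing R] (xs : List R)
    (hreg : IsRegularSeq xs)
    (P : Ideal R) (hP : P = Ideal.span {a | a ∈ xs}) (hprime : P.IsPrime)
    (s g : R) (hs : s ∉ P) (m : ℕ) (h : s * g ∈ P ^ m) :
    g ∈ P ^ m :=
  mem_prime_pow_of_mul_mem_general xs hreg P hP hprime s g hs m h
end

section
/- Let R be a commutative Noetherian local ring whose maximal ideal 𝔪 is generated by a regular sequence x_1, …, x_n (i.e., R is regular local with regular system of parameters x_1, …, x_n). Let I_1, …, I_k be ideals of R and m_1, …, m_k positive integers; set m = ∏_i m_i and m_{î} = ∏_{j ≠ i} m_j. Then Σ_{i=1}^k I_i^{m_{î}} ⊆ 𝔪^m if and only if I_i ⊆ 𝔪^{m_i} for all i. -/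
namespace RegQR

open MvPolynomial Set

variable {R : Type*} [CommRing R]

/-- A regular sequence stored in *reverse* order: `f 0` is the last element of the
sequence, regular modulo the ideal generated by the others. -/
def RegSeqRev : ∀ {c : ℕ}, (Fin c → R) → Prop
  | 0, _ => True
  | _ + 1, f => RegSeqRev (f ∘ Fin.succ) ∧
      ∀ z : R, f 0 * z ∈ Ideal.span (Set.range (f ∘ Fin.succ)) →
        z ∈ Ideal.span (Set.range (f ∘ Fin.succ))

lemma degree_eq {c n : ℕ} {P : MvPolynomial (Fin c) R} (hP : P.IsHomogeneous n)
    {m : Fin c →₀ ℕ} (hm : coeff m P ≠ 0) : (m.sum fun _ e => e) = n := by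
  have := hP hm
  simpa [Finsupp.weight_apply, Pi.one_apply, smul_eq_mul, mul_one] using this

lemma finsupp_sum_eq_zero {c : ℕ} {m : Fin c →₀ ℕ} (h : (m.sum fun _ e => e) = 0) :
    m = 0 := by
  ext i
  by_cases hi : i ∈ m.support
  · exact Finset.sum_eq_zero_iff.mp h i hi
  · simpa using Finsupp.notMem_support_iff.mp hi

lemma isHom_zero_eq_C {c : ℕ} {P : MvPolynomial (Fin c) R} (hP : P.IsHomogeneous 0) :
    P = C (coeff 0 P) := by
  ext m
  rw [coeff_C]
  by_cases hm : coeff m P = 0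
  · rw [hm]
    split
    · next h => rw [← h] at hm; exact hm.symm ▸ rfl
    · rfl
  · have : m = 0 := finsupp_sum_eq_zero (degree_eq hP hm)
    subst this
    simp

lemma prod_pow_mem {c : ℕ} (f : Fin c → R) {J : Ideal R} (hf : ∀ i, f i ∈ J)
    (m : Fin c →₀ ℕ) : (m.prod fun i e => f i ^ e) ∈ J ^ (m.sum fun _ e => e) := by
  classical
  rw [Finsupp.prod, Finsupp.sum, ← Finset.prod_pow_eq_pow_sum]
  exact Ideal.prod_mem_prod fun i _ => Ideal.pow_mem_pow (hf i) _

lemma eval_mem_mul_pow {c n : ℕ} {f : Fin c → R} {J I : Ideal R} (hf : ∀ i, f i ∈ J)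
    {P : MvPolynomial (Fin c) R} (hP : P.IsHomogeneous n) (hc : ∀ m, P.coeff m ∈ I) :
    eval f P ∈ I * J ^ n := by
  classical
  have hrep : eval f P = ∑ m ∈ P.support, coeff m P * (m.prod fun i e => f i ^ e) := by
    conv_lhs => rw [P.as_sum]
    rw [map_sum]
    exact Finset.sum_congr rfl fun m _ => eval_monomial
  rw [hrep]
  refine Submodule.sum_mem _ fun m hm => ?_
  have hdeg := degree_eq hP (mem_support_iff.mp hm)
  rw [← hdeg]
  exact Ideal.mul_mem_mul (hc m) (prod_pow_mem f hf m)

lemma eval_mem_pow {c n : ℕ} {f : Fin c → R} {J : Ideal R} (hf : ∀ i, f i ∈ J)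
    {P : MvPolynomial (Fin c) R} (hP : P.IsHomogeneous n) :
    eval f P ∈ J ^ n := by
  have := eval_mem_mul_pow (I := (⊤ : Ideal R)) hf hP (fun _ => trivial)
  simpa using this

lemma exists_isHom_eval {c : ℕ} (f : Fin c → R) (n : ℕ) {x : R}
    (hx : x ∈ (Ideal.span (Set.range f)) ^ n) :
    ∃ P : MvPolynomial (Fin c) R, P.IsHomogeneous n ∧ eval f P = x := by
  induction n generalizing x with
  | zero => exact ⟨C x, isHomogeneous_C _ _, eval_C _⟩
  | succ n ih =>
    rw [pow_succ] at hx
    refine Submodule.mul_induction_on hx ?_ ?_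
    · intro a ha b hb
      obtain ⟨P₁, hP₁, he₁⟩ := ih ha
      obtain ⟨co, hco⟩ := (Submodule.mem_span_range_iff_exists_fun R).mp
        (show b ∈ Submodule.span R (Set.range f) from hb)
      refine ⟨P₁ * ∑ i, C (co i) * X i, ?_, ?_⟩
      · refine hP₁.mul (IsHomogeneous.sum _ _ _ fun i _ => ?_)
        simpa using isHomogeneous_C_mul_X_pow (co i) i 1
      · rw [map_mul, he₁, map_sum]
        simp only [map_mul, eval_C, eval_X]
        rw [← hco]
        simp [smul_eq_mul]
    · rintro x y ⟨P, hP, he⟩ ⟨Q, hQ, heq⟩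
      exact ⟨P + Q, hP.add hQ, by rw [map_add, he, heq]⟩

/-- Quasi-regularity. -/
def QRseq {c : ℕ} (f : Fin c → R) : Prop :=
  ∀ (n : ℕ) (P : MvPolynomial (Fin c) R), P.IsHomogeneous n →
    eval f P ∈ (Ideal.span (Set.range f)) ^ (n + 1) →
    ∀ m, P.coeff m ∈ Ideal.span (Set.range f)

lemma nzd_pow {c : ℕ} {f' : Fin c → R} (hQR : QRseq f') {g : R}
    (hg : ∀ z, g * z ∈ Ideal.span (Set.range f') → z ∈ Ideal.span (Set.range f')) :
    ∀ (m : ℕ) (z : R), g * z ∈ (Ideal.span (Set.range f')) ^ m →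
      z ∈ (Ideal.span (Set.range f')) ^ m := by
  intro m
  induction m with
  | zero => intro z _; simp only [pow_zero, Ideal.one_eq_top]; exact Submodule.mem_top
  | succ m ih =>
    intro z hz
    have hzm : z ∈ (Ideal.span (Set.range f')) ^ m :=
      ih z (Ideal.pow_le_pow_right (Nat.le_succ m) hz)
    obtain ⟨Z, hZ, rfl⟩ := exists_isHom_eval f' m hzm
    have h1 : eval f' (C g * Z) ∈ (Ideal.span (Set.range f')) ^ (m + 1) := by
      rwa [map_mul, eval_C]
    have h2 : (C g * Z).IsHomogeneous m := by
      simpa using (isHomogeneous_C _ g).mul hZ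
    have h3 := hQR m (C g * Z) h2 h1
    have h4 : ∀ d, Z.coeff d ∈ Ideal.span (Set.range f') := fun d =>
      hg _ (by simpa [coeff_C_mul] using h3 d)
    have h5 := eval_mem_mul_pow (J := Ideal.span (Set.range f'))
      (fun i => Ideal.subset_span (mem_range_self i)) hZ h4
    rwa [← pow_succ'] at h5

lemma pow_sup_le (J' : Ideal R) (g : R) (n : ℕ) :
    (J' ⊔ Ideal.span {g}) ^ (n + 1) ≤
      J' ^ (n + 1) ⊔ Ideal.span {g} * (J' ⊔ Ideal.span {g}) ^ n := by
  induction n with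
  | zero => simp [Ideal.mul_top]
  | succ n ih =>
    have e1 : (J' ⊔ Ideal.span {g}) ^ (n + 1 + 1)
        = (J' ⊔ Ideal.span {g}) ^ (n + 1) * (J' ⊔ Ideal.span {g}) := pow_succ _ _
    rw [e1]
    refine le_trans (Ideal.mul_mono_left ih) ?_
    rw [Submodule.sup_mul, Submodule.mul_sup]
    have hJle : J' ^ (n + 1) ≤ (J' ⊔ Ideal.span {g}) ^ (n + 1) :=
      Ideal.pow_right_mono le_sup_left _
    refine sup_le (sup_le ?_ ?_) ?_
    · rw [← pow_succ]
      exact le_sup_left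
    · calc J' ^ (n + 1) * Ideal.span {g} = Ideal.span {g} * J' ^ (n + 1) := mul_comm _ _
        _ ≤ Ideal.span {g} * (J' ⊔ Ideal.span {g}) ^ (n + 1) := Ideal.mul_mono_right hJle
        _ ≤ _ := le_sup_right
    · calc Ideal.span {g} * (J' ⊔ Ideal.span {g}) ^ n * (J' ⊔ Ideal.span {g})
          = Ideal.span {g} * (J' ⊔ Ideal.span {g}) ^ (n + 1) := by rw [mul_assoc, ← pow_succ]
        _ ≤ _ := le_sup_right


lemma weight1_eq {c : ℕ} (m : Fin c →₀ ℕ) :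
    ((Finsupp.weight 1) m : ℕ) = m.sum fun _ e => e := by
  simp [Finsupp.weight_apply, Pi.one_apply, smul_eq_mul, mul_one]

lemma qr_succ_core {c : ℕ} (f : Fin (c + 1) → R) (J J' : Ideal R)
    (hJ' : J' = Ideal.span (Set.range (f ∘ Fin.succ)))
    (hJm : J = J' ⊔ Ideal.span {f 0})
    (hqr' : QRseq (f ∘ Fin.succ))
    (hg : ∀ z, f 0 * z ∈ J' → z ∈ J') :
    ∀ (n : ℕ) (P : MvPolynomial (Fin (c + 1)) R), P.IsHomogeneous n →
      eval f P ∈ J ^ (n + 1) → ∀ m, P.coeff m ∈ J := by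
  have hJ'le : J' ≤ J := hJm ▸ le_sup_left
  have hfJ : ∀ i, f i ∈ J := by
    intro i
    have : f i ∈ Ideal.span (Set.range f) := Ideal.subset_span (Set.mem_range_self i)
    have hsp : Ideal.span (Set.range f) = J := by
      rw [Fin.range_fin_succ, Ideal.span_insert, sup_comm, hJm, hJ']
      rfl
    rwa [hsp] at this
  have hf'J' : ∀ i, (f ∘ Fin.succ) i ∈ J' := by
    intro i
    rw [hJ']
    exact Ideal.subset_span (Set.mem_range_self i)
  have hNZ : ∀ (m : ℕ) (z : R), f 0 * z ∈ J' ^ m → z ∈ J' ^ m := by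
    rw [hJ']
    rw [hJ'] at hg
    exact nzd_pow hqr' hg
  intro n
  induction n with
  | zero =>
    intro P hP hPev m
    have hP0 : P = C (coeff 0 P) := isHom_zero_eq_C hP
    have hc0 : coeff 0 P ∈ J := by
      rw [hP0, eval_C, pow_one] at hPev
      exact hPev
    rw [hP0, coeff_C]
    split
    · exact hc0
    · exact zero_mem J
  | succ N ihN =>
    intro P hP hPev
    set g : R := f 0 with hgdef
    set f' : Fin c → R := f ∘ Fin.succ with hf'def
    set q := finSuccEquiv R c P with hq
    set Q : MvPolynomial (Fin c) R := q.coeff 0 with hQdef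
    have hQ : Q.IsHomogeneous (N + 1) :=
      hP.finSuccEquiv_coeff_isHomogeneous 0 (N + 1) (zero_add _)
    set P' : MvPolynomial (Fin (c + 1)) R := (finSuccEquiv R c).symm q.divX with hP'def
    have hq' : finSuccEquiv R c P' = q.divX := (finSuccEquiv R c).apply_symm_apply _
    have hcoeffP' : ∀ (i : ℕ) (d : Fin c →₀ ℕ),
        coeff (Finsupp.cons i d) P' = coeff (Finsupp.cons (i + 1) d) P := by
      intro i d
      rw [← finSuccEquiv_coeff_coeff, hq', Polynomial.coeff_divX, finSuccEquiv_coeff_coeff]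
    have hP'hom : P'.IsHomogeneous N := by
      intro d hd
      rw [weight1_eq]
      have hdc : Finsupp.cons (d 0) d.tail = d := Finsupp.cons_tail d
      have hne : coeff (Finsupp.cons (d 0 + 1) d.tail) P ≠ 0 := by
        rw [← hcoeffP', hdc]
        exact hd
      have hdeg := degree_eq hP hne
      rw [Finsupp.sum_cons] at hdeg
      have hds : (d.sum fun _ e => e) = d 0 + (d.tail.sum fun _ e => e) := by
        conv_lhs => rw [← hdc]
        rw [Finsupp.sum_cons]
      omega
    have hfc : f = Fin.cons g f' := (Fin.cons_self_tail f).symm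
    have e1 : eval f P = Polynomial.eval g (Polynomial.map (eval f') q) := by
      conv_lhs => rw [hfc]
      exact eval_eq_eval_mv_eval' f' g P
    have e2 : eval f P' = Polynomial.eval g (Polynomial.map (eval f') q.divX) := by
      conv_lhs => rw [hfc]
      rw [eval_eq_eval_mv_eval' f' g P', hq']
    have hsplit : eval f P = eval f' Q + g * eval f P' := by
      rw [e1, e2]
      conv_lhs => rw [← Polynomial.X_mul_divX_add q]
      rw [Polynomial.map_add, Polynomial.map_mul, Polynomial.map_X, Polynomial.map_C,
        Polynomial.eval_add, Polynomial.eval_mul, Polynomial.eval_X, Polynomial.eval_C]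
      ring
    have hle : J ^ (N + 1 + 1) ≤ J' ^ (N + 1 + 1) ⊔ Ideal.span {g} * J ^ (N + 1) := by
      conv_lhs => rw [hJm]
      refine le_trans (pow_sup_le J' g (N + 1)) ?_
      rw [← hJm]
    have hmem : eval f P ∈ J' ^ (N + 1 + 1) ⊔ Ideal.span {g} * J ^ (N + 1) := hle hPev
    obtain ⟨A, hA, B', hB', hsum⟩ := Submodule.mem_sup.mp hmem
    obtain ⟨B, hB, hBeq⟩ := Ideal.mem_span_singleton_mul.mp hB'
    have hQmem : eval f' Q ∈ J' ^ (N + 1) := by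
      have := eval_mem_pow (J := Ideal.span (Set.range f')) (f := f')
        (fun i => Ideal.subset_span (Set.mem_range_self i)) hQ
      rwa [← hJ'] at this
    have hkey : g * (B - eval f P') = eval f' Q - A := by
      have h1 : A + g * B = eval f P := by rw [hBeq]; exact hsum
      linear_combination h1 + hsplit
    have hz : B - eval f P' ∈ J' ^ (N + 1) := by
      apply hNZ (N + 1)
      rw [hkey]
      exact sub_mem hQmem (Ideal.pow_le_pow_right (Nat.le_succ _) hA)
    have hPb : eval f P' ∈ J ^ (N + 1) := by
      have hBP : eval f P' = B - (B - eval f P') := by ring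
      rw [hBP]
      exact sub_mem hB (Ideal.pow_right_mono hJ'le _ hz)
    have hcP' : ∀ d, coeff d P' ∈ J := ihN P' hP'hom hPb
    obtain ⟨Z, hZhom, hZev⟩ := exists_isHom_eval f' (N + 1) (by rw [hJ'] at hz; exact hz)
    have hQZ : eval f' (Q - C g * Z) ∈ Ideal.span (Set.range f') ^ (N + 1 + 1) := by
      rw [map_sub, map_mul, eval_C, hZev]
      have hQA : eval f' Q - g * (B - eval f P') = A := by linear_combination -hkey
      rw [hQA, ← hJ']
      exact hA
    have hcQ : ∀ d, coeff d Q ∈ J := by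
      intro d
      have h1 := hqr' (N + 1) (Q - C g * Z)
        (hQ.sub (by simpa using (isHomogeneous_C _ g).mul hZhom)) hQZ d
      have h2 : coeff d Q = coeff d (Q - C g * Z) + g * coeff d Z := by
        simp [coeff_sub, coeff_C_mul]
      rw [h2]
      refine add_mem ?_ (Ideal.mul_mem_right _ J (hfJ 0))
      rw [hJ'] at hJ'le
      exact hJ'le h1
    intro m
    have hmc : Finsupp.cons (m 0) m.tail = m := Finsupp.cons_tail m
    cases h0 : m 0 with
    | zero =>
      have hcm : coeff m P = coeff m.tail Q := by
        conv_lhs => rw [← hmc, h0]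
        exact (finSuccEquiv_coeff_coeff m.tail P 0).symm
      rw [hcm]
      exact hcQ _
    | succ i =>
      have hcm : coeff m P = coeff (Finsupp.cons i m.tail) P' := by
        conv_lhs => rw [← hmc, h0]
        exact (hcoeffP' i m.tail).symm
      rw [hcm]
      exact hcP' _

theorem regSeqRev_qr : ∀ {c : ℕ} (f : Fin c → R), RegSeqRev f → QRseq f := by
  intro c
  induction c with
  | zero =>
    intro f _ n P hP hPev m
    have h0 : Set.range f = ∅ := Set.range_eq_empty f
    rw [h0, Ideal.span_empty] at hPev ⊢
    have hbot : (⊥ : Ideal R) ^ (n + 1) = ⊥ := by rw [pow_succ, Ideal.mul_bot]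
    rw [hbot] at hPev
    have hm0 : m = (0 : Fin 0 →₀ ℕ) := Subsingleton.elim _ _
    have hP0 : P = C (coeff 0 P) := eq_C_of_isEmpty P
    rw [hP0, eval_C] at hPev
    rw [hm0, hP0]
    simpa using hPev
  | succ c ihc =>
    intro f hreg
    obtain ⟨hreg', hg⟩ := hreg
    have hqr' : QRseq (f ∘ Fin.succ) := ihc _ hreg'
    have hsp : Ideal.span (Set.range f) =
        Ideal.span (Set.range (f ∘ Fin.succ)) ⊔ Ideal.span {f 0} := by
      rw [Fin.range_fin_succ, Ideal.span_insert, sup_comm]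
      rfl
    intro n P hP hPev m
    exact qr_succ_core f _ _ rfl hsp hqr' hg n P hP hPev m


lemma step_lemma {c : ℕ} (f : Fin c → R) (hreg : RegSeqRev f)
    (hprime : (Ideal.span (Set.range f)).IsPrime)
    {x : R} {t d : ℕ} (ht : t ≠ 0)
    (hx : x ∈ (Ideal.span (Set.range f)) ^ d)
    (hxt : x ^ t ∈ (Ideal.span (Set.range f)) ^ (d * t + 1)) :
    x ∈ (Ideal.span (Set.range f)) ^ (d + 1) := by
  obtain ⟨P, hPhom, hPev⟩ := exists_isHom_eval f d hx
  have hpt : eval f (P ^ t) ∈ (Ideal.span (Set.range f)) ^ (d * t + 1) := by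
    rw [map_pow, hPev]
    exact hxt
  have hco := regSeqRev_qr f hreg (d * t) (P ^ t) (hPhom.pow t) hpt
  haveI := hprime
  have hmap : (MvPolynomial.map (Ideal.Quotient.mk (Ideal.span (Set.range f))) P) ^ t = 0 := by
    rw [← map_pow]
    apply MvPolynomial.ext
    intro md
    rw [coeff_map, coeff_zero, Ideal.Quotient.eq_zero_iff_mem]
    exact hco md
  have hP0 : MvPolynomial.map (Ideal.Quotient.mk (Ideal.span (Set.range f))) P = 0 :=
    (pow_eq_zero_iff ht).mp hmap
  have hcP : ∀ md, coeff md P ∈ Ideal.span (Set.range f) := by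
    intro md
    have h3 := congrArg (coeff md) hP0
    rw [coeff_map, coeff_zero] at h3
    exact Ideal.Quotient.eq_zero_iff_mem.mp h3
  have h4 := eval_mem_mul_pow (J := Ideal.span (Set.range f)) (I := Ideal.span (Set.range f))
    (fun i => Ideal.subset_span (Set.mem_range_self i)) hPhom hcP
  rwa [hPev, ← pow_succ'] at h4

lemma mem_pow_of_pow_mem {c : ℕ} (f : Fin c → R) (hreg : RegSeqRev f)
    (hprime : (Ideal.span (Set.range f)).IsPrime)
    {x : R} {t s : ℕ} (ht : t ≠ 0)
    (hxt : x ^ t ∈ (Ideal.span (Set.range f)) ^ (s * t)) :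
    x ∈ (Ideal.span (Set.range f)) ^ s := by
  suffices H : ∀ e, e ≤ s → x ∈ (Ideal.span (Set.range f)) ^ e from H s le_rfl
  intro e
  induction e with
  | zero =>
    intro _
    rw [pow_zero, Ideal.one_eq_top]
    exact Submodule.mem_top
  | succ e ih =>
    intro hes
    have hxe := ih (Nat.le_of_succ_le hes)
    refine step_lemma f hreg hprime ht hxe ?_
    refine Ideal.pow_le_pow_right ?_ hxt
    have ht1 : 1 ≤ t := Nat.one_le_iff_ne_zero.mpr ht
    calc e * t + 1 ≤ e * t + t := by omega
      _ = (e + 1) * t := by ring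
      _ ≤ s * t := Nat.mul_le_mul_right t hes

/-- The hypothesis of the main theorem, reformulated for a function `Fin c → R`. -/
def Hfun {c : ℕ} (f : Fin c → R) : Prop :=
  ∀ (i : Fin c) (r : R), f i * r ∈ Ideal.span (f '' {j | j < i}) →
    r ∈ Ideal.span (f '' {j | j < i})

lemma hfun_regSeqRev : ∀ {c : ℕ} (f : Fin c → R), Hfun f → RegSeqRev (f ∘ Fin.rev) := by
  intro c
  induction c with
  | zero => intro f _; trivial
  | succ c ih =>
    intro f hf
    have hcomp : (f ∘ Fin.rev) ∘ Fin.succ = (f ∘ Fin.castSucc) ∘ Fin.rev := by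
      funext i
      simp only [Function.comp_apply]
      congr 1
      ext
      rw [Fin.val_rev, Fin.coe_castSucc, Fin.val_rev, Fin.val_succ]
      omega
    constructor
    · rw [hcomp]
      apply ih
      intro i r
      have hset : (f ∘ Fin.castSucc) '' {j | j < i} = f '' {j | j < i.castSucc} := by
        ext a
        constructor
        · rintro ⟨j, hj, rfl⟩
          exact ⟨j.castSucc, Fin.castSucc_lt_castSucc_iff.mpr hj, rfl⟩
        · rintro ⟨j, hj, rfl⟩
          have hji : (j : ℕ) < (i : ℕ) := hj
          have hjc : (j : ℕ) < c := lt_of_lt_of_le hji (Nat.le_of_lt_succ i.castSucc.isLt)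
          have hcast : Fin.castSucc ⟨j.val, hjc⟩ = j := by ext; simp
          refine ⟨⟨j.val, hjc⟩, ?_, ?_⟩
          · exact hji
          · simp only [Function.comp_apply, hcast]
      rw [hset]
      exact hf i.castSucc r
    · have hrev0 : Fin.rev (0 : Fin (c + 1)) = Fin.last c := by
        ext
        rw [Fin.val_rev]
        simp
      have h1 : (f ∘ Fin.rev) 0 = f (Fin.last c) := by
        simp only [Function.comp_apply, hrev0]
      have h2 : Ideal.span (Set.range ((f ∘ Fin.rev) ∘ Fin.succ)) =
          Ideal.span (f '' {j | j < Fin.last c}) := by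
        rw [hcomp, Function.Surjective.range_comp Fin.rev_surjective]
        rw [Set.range_comp]
        congr 1
        rw [Fin.range_castSucc]
        ext j
        simp [Fin.lt_def, Fin.last]
      rw [h1, h2]
      exact hf (Fin.last c)

lemma isRegularSeq_hfun {xs : List R}
    (h : ∀ (i : Fin xs.length) (r : R),
      xs.get i * r ∈ Ideal.span {a | a ∈ xs.take (i : ℕ)} →
        r ∈ Ideal.span {a | a ∈ xs.take (i : ℕ)}) :
    Hfun (fun i : Fin xs.length => xs.get i) := by
  intro i r
  have hset : (fun j : Fin xs.length => xs.get j) '' {j | j < i} =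
      {a | a ∈ xs.take (i : ℕ)} := by
    ext a
    simp only [Set.mem_image, Set.mem_setOf_eq]
    constructor
    · rintro ⟨j, hj, rfl⟩
      rw [List.mem_take_iff_getElem]
      refine ⟨j.val, ?_, ?_⟩
      · simp only [lt_min_iff]
        exact ⟨hj, j.isLt⟩
      · simp [List.get_eq_getElem]
    · intro ha
      rw [List.mem_take_iff_getElem] at ha
      obtain ⟨j, hj, rfl⟩ := ha
      rw [lt_min_iff] at hj
      exact ⟨⟨j, hj.2⟩, hj.1, by simp [List.get_eq_getElem]⟩
  rw [hset]
  exact h i r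

lemma span_range_get (xs : List R) :
    Ideal.span (Set.range fun i : Fin xs.length => xs.get i) = Ideal.span {a | a ∈ xs} := by
  congr 1
  ext a
  simp only [Set.mem_range, Set.mem_setOf_eq]
  rw [List.mem_iff_get]

end RegQR

/-- Let `R` be a Noetherian local ring whose maximal ideal `𝔪` is generated
by a regular sequence. Let `I₁, …, I_k` be ideals and `m₁, …, m_k` positive integers; set
`m = ∏ᵢ mᵢ` and `m_{î} = ∏_{j ≠ i} m_j`. Then `Σᵢ Iᵢ^{m_{î}} ⊆ 𝔪 ^ m` iff `Iᵢ ⊆ 𝔪^{mᵢ}` for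
all `i`. -/
theorem sum_pow_le_maximal_pow_iff
    {R : Type*} [CommRing R] [IsNoetherianRing R] [IsLocalRing R]
    (xs : List R) (hreg : IsRegularSeq xs)
    (hspan : Ideal.span {a | a ∈ xs} = IsLocalRing.maximalIdeal R)
    {k : ℕ} (I : Fin k → Ideal R) (m : Fin k → ℕ) (hm : ∀ i, 0 < m i) :
    (∑ i, (I i) ^ (∏ j ∈ Finset.univ.erase i, m j)) ≤
        (IsLocalRing.maximalIdeal R) ^ (∏ i, m i) ↔
      ∀ i, I i ≤ (IsLocalRing.maximalIdeal R) ^ (m i) := by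
  classical
  obtain ⟨c, f, hrr, hsp2⟩ : ∃ (c : ℕ) (f : Fin c → R), RegQR.RegSeqRev f ∧
      Ideal.span (Set.range f) = IsLocalRing.maximalIdeal R := by
    refine ⟨xs.length, (fun i : Fin xs.length => xs.get i) ∘ Fin.rev,
      RegQR.hfun_regSeqRev _ (RegQR.isRegularSeq_hfun hreg.1), ?_⟩
    rw [Function.Surjective.range_comp Fin.rev_surjective, RegQR.span_range_get, hspan]
  have hprime : (Ideal.span (Set.range f)).IsPrime := by
    rw [hsp2]
    exact (IsLocalRing.maximalIdeal.isMaximal R).isPrime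
  constructor
  · intro h i x hx
    have htpos : 0 < ∏ j ∈ Finset.univ.erase i, m j :=
      Finset.prod_pos fun j _ => hm j
    have hsingle : (I i) ^ (∏ j ∈ Finset.univ.erase i, m j) ≤
        ∑ j, (I j) ^ (∏ l ∈ Finset.univ.erase j, m l) := by
      rw [← Finset.add_sum_erase Finset.univ _ (Finset.mem_univ i), Ideal.add_eq_sup]
      exact le_sup_left
    have hxt : x ^ (∏ j ∈ Finset.univ.erase i, m j) ∈
        (IsLocalRing.maximalIdeal R) ^ (m i * ∏ j ∈ Finset.univ.erase i, m j) := by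
      have h2 := h (hsingle (Ideal.pow_mem_pow hx _))
      rwa [← Finset.mul_prod_erase Finset.univ m (Finset.mem_univ i)] at h2
    have h3 := RegQR.mem_pow_of_pow_mem f hrr hprime (Nat.pos_iff_ne_zero.mp htpos)
      (x := x) (s := m i) (by rw [hsp2]; exact hxt)
    rwa [hsp2] at h3
  · intro h
    refine Finset.sum_induction _ (· ≤ (IsLocalRing.maximalIdeal R) ^ (∏ i, m i))
      (fun a b ha hb => ?_) ?_ ?_
    · rw [Ideal.add_eq_sup]
      exact sup_le ha hb
    · rw [Submodule.zero_eq_bot]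
      exact bot_le
    · intro i _
      calc (I i) ^ (∏ j ∈ Finset.univ.erase i, m j)
          ≤ ((IsLocalRing.maximalIdeal R) ^ (m i)) ^ (∏ j ∈ Finset.univ.erase i, m j) :=
            Ideal.pow_right_mono (h i) _
        _ = (IsLocalRing.maximalIdeal R) ^ (m i * ∏ j ∈ Finset.univ.erase i, m j) :=
            (pow_mul _ _ _).symm
        _ = (IsLocalRing.maximalIdeal R) ^ (∏ j, m j) := by
            rw [Finset.mul_prod_erase Finset.univ m (Finset.mem_univ i)]
end

section
/- Let A be a commutative ring with an ℕ-grading 𝒜 : ℕ → Submodule ℤ A making A a graded ℤ-algebra. If A is torsion-free as a ℤ-module (equivalently flat over ℤ), then the scheme Proj 𝒜 is flat over Spec ℤ, i.e., the unique morphism of schemes Proj 𝒜 ⟶ Spec ℤ is a flat morphism. -/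
/-!
Over `ℤ` flatness is torsion-freeness, which passes to `ℤ`-submodules. The stalk of `Proj 𝒜`
at `x` is the degree-zero part of `A_x`, a subring of the flat `ℤ`-module `A_x`, hence is
`ℤ`-flat. The stalk of `Spec ℤ` at the image point is a localization `ℤ_(p)`, and a ring map
out of a localization of `R` into an `R`-flat ring is flat.
-/

open AlgebraicGeometry

theorem Module.Flat.of_injective_of_isDedekindDomain {R M N : Type*} [CommRing R]
    [IsDedekindDomain R] [AddCommGroup M] [Module R M] [AddCommGroup N] [Module R N]
    [Module.Flat R N] (f : M →ₗ[R] N) (hf : Function.Injective f) : Module.Flat R M :=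
  have := hf.moduleIsTorsionFree f (map_smul f)
  inferInstance

theorem Module.Flat.int_of_injective_ringHom {S T : Type*} [CommRing S] [CommRing T]
    [Module.Flat ℤ T] (f : S →+* T) (hf : Function.Injective f) : Module.Flat ℤ S :=
  .of_injective_of_isDedekindDomain f.toAddMonoidHom.toIntLinearMap hf

theorem RingHom.Flat.of_isLocalization {R Rp T : Type*} [CommRing R] [CommRing Rp] [CommRing T]
    [Algebra R Rp] [Algebra R T] (p : Submonoid R) [IsLocalization p Rp] [Module.Flat R T]
    (g : Rp →ₐ[R] T) : g.toRingHom.Flat := by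
  algebraize [g.toRingHom]
  have : IsScalarTower R Rp T := .of_algebraMap_eq fun r => (g.commutes r).symm
  exact (Module.flat_iff_of_isLocalization Rp p T).mpr ‹_›

instance HomogeneousLocalization.AtPrime.flat_int {ι A σ : Type*} [CommRing A] [SetLike σ A]
    [AddSubgroupClass σ A] [AddCommMonoid ι] [DecidableEq ι] (𝒜 : ι → σ) [GradedRing 𝒜]
    [Module.Flat ℤ A] (P : Ideal A) [P.IsPrime] :
    Module.Flat ℤ (HomogeneousLocalization.AtPrime 𝒜 P) :=
  have : Module.Flat ℤ (Localization.AtPrime P) := .trans ℤ A _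
  .int_of_injective_ringHom (algebraMap _ (Localization.AtPrime P))
    (HomogeneousLocalization.val_injective _)

instance AlgebraicGeometry.Proj.flat_int_stalk {A : Type*} [CommRing A]
    (𝒜 : ℕ → Submodule ℤ A) [GradedAlgebra 𝒜] [Module.Flat ℤ A] (x : Proj 𝒜) :
    Module.Flat ℤ ((Proj 𝒜).presheaf.stalk x) :=
  .int_of_injective_ringHom (Proj.stalkIso 𝒜 x).hom.hom
    (Proj.stalkIso 𝒜 x).commRingCatIsoToRingEquiv.injective

theorem AlgebraicGeometry.Scheme.flat_stalkMap_specZIsTerminal_from (X : Scheme) (x : X)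
    [Module.Flat ℤ (X.presheaf.stalk x)] :
    ((specZIsTerminal.from X).stalkMap x).hom.Flat := by
  set y := (specZIsTerminal.from X).base x
  have := y.isPrime
  have : IsLocalization y.asIdeal.primeCompl ((Spec (CommRingCat.of ℤ)).presheaf.stalk y) := by
    -- the structure-sheaf `ℤ`-algebra on the stalk is the canonical one, as `ℤ` is initial
    have h := StructureSheaf.IsLocalization.to_stalk ℤ y
    rwa [Subsingleton.elim (StructureSheaf.stalkAlgebra ℤ y) (Ring.toIntAlgebra _)] at h
  exact .of_isLocalization y.asIdeal.primeCompl
    ((specZIsTerminal.from X).stalkMap x).hom.toIntAlgHom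

/-- Let `A` be a commutative ring with an `ℕ`-grading `𝒜` making it a graded
`ℤ`-algebra. If `A` is flat (equivalently torsion-free) as a `ℤ`-module, then `Proj 𝒜` is flat
over `Spec ℤ`: the unique morphism `Proj 𝒜 ⟶ Spec ℤ` is flat, i.e. all of its induced maps on
stalks are flat ring maps. -/
theorem proj_flat_over_spec_int
    {A : Type} [CommRing A] (𝒜 : ℕ → Submodule ℤ A) [GradedAlgebra 𝒜]
    (hA : Module.Flat ℤ A) :
    ∀ x : Proj 𝒜,
      RingHom.Flat ((specZIsTerminal.from (Proj 𝒜)).stalkMap x).hom :=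
  fun x => (Proj 𝒜).flat_stalkMap_specZIsTerminal_from x
end

section
/- Let p be a prime number, A a commutative ring with a Frobenius lift ψ at p, and I an ideal of A such that for every k and every f ∈ A, p·f ∈ I^k implies f ∈ I^k. Suppose a_1, …, a_m generate I and ψ(a_i) = a_i^p for every i. Then ψ(I) ⊆ I^p, and consequently for every n ≥ 0, ψ(I^n) ⊆ I^{p·n} and for every a ∈ I^n there exists b ∈ I^{p·n} with ψ(a) = a^p + p·b. -/
/-- Let `p` be a prime, `ψ` a Frobenius lift at `p` on `A`, and `I` an ideal
such that `p * f ∈ I ^ k` implies `f ∈ I ^ k` for all `k`. If `a₁, …, a_m` are toric generators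
of `I` (they generate `I` and `ψ aᵢ = aᵢ ^ p`), then `ψ(I) ⊆ I ^ p`, and consequently
`ψ(I ^ n) ⊆ I ^ (p * n)` for all `n`, and every `a ∈ I ^ n` satisfies `ψ a = a ^ p + p * b`
for some `b ∈ I ^ (p * n)`. -/
theorem toric_generators_frobenius
    {A : Type*} [CommRing A] (p : ℕ) (hp : p.Prime) (ψ : A →+* A)
    (hF : ∀ a : A, ∃ b : A, ψ a = a ^ p + p * b)
    (I : Ideal A)
    (hflat : ∀ (k : ℕ) (f : A), (p : A) * f ∈ I ^ k → f ∈ I ^ k)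
    {m : ℕ} (a : Fin m → A) (hgen : Ideal.span (Set.range a) = I)
    (htoric : ∀ i, ψ (a i) = a i ^ p) :
    (∀ x ∈ I, ψ x ∈ I ^ p) ∧
      (∀ n : ℕ, ∀ x ∈ I ^ n, ψ x ∈ I ^ (p * n)) ∧
      (∀ n : ℕ, ∀ x ∈ I ^ n, ∃ b ∈ I ^ (p * n), ψ x = x ^ p + p * b) := by
  have h1 : Ideal.map ψ I ≤ I ^ p := by
    rw [← hgen, Ideal.map_span, Ideal.span_le]
    rintro y hy
    obtain ⟨x, hx, rfl⟩ := hy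
    obtain ⟨i, rfl⟩ := hx
    simp only [SetLike.mem_coe]
    rw [htoric i]
    have : a i ∈ I := by
      rw [← hgen]; exact Ideal.subset_span (Set.mem_range_self i)
    have h' := Ideal.pow_mem_pow this p
    rwa [← hgen] at h'
  have h2 : ∀ n : ℕ, ∀ x ∈ I ^ n, ψ x ∈ I ^ (p * n) := by
    intro n x hx
    have : Ideal.map ψ (I ^ n) ≤ I ^ (p * n) := by
      rw [Ideal.map_pow, pow_mul]
      exact Ideal.pow_right_mono h1 n
    exact this (Ideal.mem_map_of_mem ψ hx)
  refine ⟨fun x hx => by simpa using h2 1 x (by simpa using hx), h2, ?_⟩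
  intro n x hx
  obtain ⟨b, hb⟩ := hF x
  have hxp : x ^ p ∈ I ^ (p * n) := by
    rw [mul_comm, pow_mul]
    exact Ideal.pow_mem_pow hx p
  have hpb : (p : A) * b ∈ I ^ (p * n) := by
    have : (p : A) * b = ψ x - x ^ p := by rw [hb]; ring
    rw [this]
    exact Ideal.sub_mem _ (h2 n x hx) hxp
  exact ⟨b, hflat _ _ hpb, hb⟩
end
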